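/- Let u₀ ∈ H^{3,3}(ℝ). Then for every k ∈ Σ \ {0}, the scattering coefficients satisfy the determinant relation a(k) · conj(a(conj(k))) + b(k) · conj(b(conj(k))) = 1. In particular, |a(k)|² + |b(k)|² = 1 for every nonzero k ∈ ℝ, and |a(k)|² − |b(k)|² = 1 for every nonzero k ∈ iℝ. -/

import Mathlib

open MeasureTheory Complex Set

noncomputable section

def MemHms (m s : ℕ) (u : ℝ → ℂ) : Prop :=
  ∀ j ≤ m, MemLp (fun x : ℝ => ((1 + x ^ 2) ^ ((s : ℝ) / 2) : ℝ) • iteratedDeriv j u x) 2 volume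

def phi (u₀ : ℝ → ℂ) (x : ℝ) : ℝ := ∫ s in Iio x, ‖deriv u₀ s‖ ^ 2

def qf (u₀ : ℝ → ℂ) (x : ℝ) : ℂ :=
  (starRingEnd ℂ) (deriv u₀ x) * Complex.exp (Complex.I * (phi u₀ x : ℝ))

def SigmaSet : Set ℂ := {k : ℂ | (k ^ 2).im = 0}

def SolPlus (u₀ : ℝ → ℂ) (k : ℂ) (f g : ℝ → ℂ) : Prop :=
  Continuous f ∧ Continuous g ∧
  (∃ C : ℝ, ∀ x : ℝ, ‖f x‖ ≤ C ∧ ‖g x‖ ≤ C) ∧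
  ∀ x : ℝ,
    f x = 1 - k * (∫ y in Ioi x, (starRingEnd ℂ) (qf u₀ y) * g y)
            - (Complex.I / 2) * (∫ y in Ioi x, (‖qf u₀ y‖ : ℂ) ^ 2 * f y) ∧
    g x = k * (∫ y in Ioi x,
              Complex.exp (2 * Complex.I * k ^ 2 * ((x - y : ℝ) : ℂ)) * qf u₀ y * f y)
            + (Complex.I / 2) * (∫ y in Ioi x,
              Complex.exp (2 * Complex.I * k ^ 2 * ((x - y : ℝ) : ℂ))
                * (‖qf u₀ y‖ : ℂ) ^ 2 * g y)

def SolMinus (u₀ : ℝ → ℂ) (k : ℂ) (f g : ℝ → ℂ) : Prop :=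
  Continuous f ∧ Continuous g ∧
  (∃ C : ℝ, ∀ x : ℝ, ‖f x‖ ≤ C ∧ ‖g x‖ ≤ C) ∧
  ∀ x : ℝ,
    f x = 1 - k * (-∫ y in Iio x, (starRingEnd ℂ) (qf u₀ y) * g y)
            - (Complex.I / 2) * (-∫ y in Iio x, (‖qf u₀ y‖ : ℂ) ^ 2 * f y) ∧
    g x = k * (-∫ y in Iio x,
              Complex.exp (2 * Complex.I * k ^ 2 * ((x - y : ℝ) : ℂ)) * qf u₀ y * f y)
            + (Complex.I / 2) * (-∫ y in Iio x,
              Complex.exp (2 * Complex.I * k ^ 2 * ((x - y : ℝ) : ℂ))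
                * (‖qf u₀ y‖ : ℂ) ^ 2 * g y)

/-- `a(k)` built from the Jost solutions. -/
def acoef (ω11p ω21p ω11m ω21m : ℝ → ℂ → ℂ) (k : ℂ) : ℂ :=
  ω11m 0 k * (starRingEnd ℂ) (ω11p 0 ((starRingEnd ℂ) k))
    + ω21m 0 k * (starRingEnd ℂ) (ω21p 0 ((starRingEnd ℂ) k))

/-- `b(k)` built from the Jost solutions. -/
def bcoef (ω11p ω21p ω11m ω21m : ℝ → ℂ → ℂ) (k : ℂ) : ℂ :=
  (starRingEnd ℂ) (ω21p 0 ((starRingEnd ℂ) k)) * (starRingEnd ℂ) (ω11m 0 ((starRingEnd ℂ) k))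
    - (starRingEnd ℂ) (ω11p 0 ((starRingEnd ℂ) k))
        * (starRingEnd ℂ) (ω21m 0 ((starRingEnd ℂ) k))

/-!
The weight in `H^{3,3}` makes `q` integrable. For `k ∈ Σ` the phase
`jostPhase k x = e^{-2ik²x}` is unimodular, and in the unknowns
`f = ω₁₁`, `G = e^{-2ik²x} ω₂₁` the Volterra equations say that `(f, G)` is an absolutely
continuous solution of a first-order linear system, tending to `(1, 0)` at `+∞` (resp. `-∞`).
For two such solutions at `k` and `k₂` with `conj k₂ = ε k`, `ε = ±1`, the sesquilinear
Wronskian `f conj f₂ + ε G conj G₂` has zero derivative almost everywhere, so it is constant and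
equal to its limit `1`; for `k₂ = -k` the bilinear Wronskian `f G₂ + G f₂` is constant `0`.
Evaluated at `x = 0` these give quadratic relations between the values of the Jost solutions, of
which the determinant relations for `a` and `b` are algebraic consequences; on `iℝ`, where
`conj k = -k`, they also force `ω⁻(0, -k) = (ω₁₁⁻(0, k), -ω₂₁⁻(0, k))`.
-/

open Filter Topology ComplexConjugate

theorem Isometry.absolutelyContinuousOnInterval_comp {X Y : Type*} [PseudoMetricSpace X]
    [PseudoMetricSpace Y] {φ : X → Y} (hφ : Isometry φ) {f : ℝ → X} {a b : ℝ}
    (hf : AbsolutelyContinuousOnInterval f a b) :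
    AbsolutelyContinuousOnInterval (φ ∘ f) a b := by
  simpa only [AbsolutelyContinuousOnInterval, Function.comp_apply, hφ.dist_eq] using hf

theorem MeasureTheory.Integrable.absolutelyContinuousOnInterval_intervalIntegral {p : ℝ → ℂ}
    (hp : Integrable p) (c a b : ℝ) :
    AbsolutelyContinuousOnInterval (fun x ↦ ∫ t in c..x, p t) a b := by
  have hp' (x y : ℝ) : IntervalIntegrable p volume x y := hp.intervalIntegrable
  have h_ac (q : ℝ → ℝ) (hq : Integrable q) :
      AbsolutelyContinuousOnInterval (((↑) : ℝ → ℂ) ∘ fun x ↦ ∫ t in a..x, q t) a b :=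
    isometry_ofReal.absolutelyContinuousOnInterval_comp
      (hq.intervalIntegrable.absolutelyContinuousOnInterval_intervalIntegral left_mem_uIcc)
  have h_split : (fun x ↦ ∫ t in c..x, p t) =
      fun x ↦ (∫ t in c..a, p t) + ∫ t in a..x, p t := by
    funext x
    rw [intervalIntegral.integral_add_adjacent_intervals (hp' c a) (hp' a x)]
  have h_re_im : (fun x ↦ ∫ t in a..x, p t) = fun x ↦
      (((↑) : ℝ → ℂ) ∘ fun x ↦ ∫ t in a..x, (p t).re) x
        + I • (((↑) : ℝ → ℂ) ∘ fun x ↦ ∫ t in a..x, (p t).im) x := by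
    funext x
    have h_re := reCLM.intervalIntegral_comp_comm (hp' a x)
    have h_im := imCLM.intervalIntegral_comp_comm (hp' a x)
    simp only [reCLM_apply, imCLM_apply] at h_re h_im
    rw [Function.comp_apply, Function.comp_apply, smul_eq_mul, mul_comm, h_re, h_im, re_add_im]
  rw [h_split]
  refine (LipschitzWith.const _).lipschitzOnWith.absolutelyContinuousOnInterval.fun_add ?_
  rw [h_re_im]
  exact (h_ac _ hp.re).fun_add ((h_ac _ hp.im).const_smul I)

structure IsACPrimitive (F F' : ℝ → ℂ) : Prop where
  absolutelyContinuousOnInterval (a b : ℝ) : AbsolutelyContinuousOnInterval F a b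
  ae_hasDerivAt : ∀ᵐ x, HasDerivAt F (F' x) x

namespace IsACPrimitive

variable {F F' G G' : ℝ → ℂ}

theorem const (c : ℂ) : IsACPrimitive (fun _ ↦ c) (fun _ ↦ 0) :=
  ⟨fun _ _ ↦ (LipschitzWith.const c).lipschitzOnWith.absolutelyContinuousOnInterval,
    ae_of_all _ fun _ ↦ hasDerivAt_const _ _⟩

theorem add (hF : IsACPrimitive F F') (hG : IsACPrimitive G G') :
    IsACPrimitive (fun x ↦ F x + G x) (fun x ↦ F' x + G' x) :=
  ⟨fun a b ↦ (hF.1 a b).fun_add (hG.1 a b), by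
    filter_upwards [hF.2, hG.2] with x hFx hGx using hFx.add hGx⟩

theorem sub (hF : IsACPrimitive F F') (hG : IsACPrimitive G G') :
    IsACPrimitive (fun x ↦ F x - G x) (fun x ↦ F' x - G' x) :=
  ⟨fun a b ↦ (hF.1 a b).fun_sub (hG.1 a b), by
    filter_upwards [hF.2, hG.2] with x hFx hGx using hFx.sub hGx⟩

theorem neg (hF : IsACPrimitive F F') : IsACPrimitive (fun x ↦ -F x) (fun x ↦ -F' x) :=
  ⟨fun a b ↦ (hF.1 a b).fun_neg, by filter_upwards [hF.2] with x hFx using hFx.neg⟩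

theorem const_mul (c : ℂ) (hF : IsACPrimitive F F') :
    IsACPrimitive (fun x ↦ c * F x) (fun x ↦ c * F' x) :=
  ⟨fun a b ↦ (hF.1 a b).const_smul c, by
    filter_upwards [hF.2] with x hFx using hFx.const_mul c⟩

theorem mul (hF : IsACPrimitive F F') (hG : IsACPrimitive G G') :
    IsACPrimitive (fun x ↦ F x * G x) (fun x ↦ F' x * G x + F x * G' x) :=
  ⟨fun a b ↦ (hF.1 a b).fun_smul (hG.1 a b), by
    filter_upwards [hF.2, hG.2] with x hFx hGx using hFx.mul hGx⟩

theorem star (hF : IsACPrimitive F F') :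
    IsACPrimitive (fun x ↦ conj (F x)) (fun x ↦ conj (F' x)) :=
  ⟨fun a b ↦ isometry_conj.absolutelyContinuousOnInterval_comp (hF.1 a b), by
    filter_upwards [hF.2] with x hFx using hFx.star⟩

theorem congr (hF : IsACPrimitive F F') (hG : ∀ x, F x = G x) (hG' : ∀ x, F' x = G' x) :
    IsACPrimitive G G' :=
  funext hG ▸ funext hG' ▸ hF

theorem eq_of_tendsto {l : Filter ℝ} [l.NeBot] {c : ℂ} (hF : IsACPrimitive F fun _ ↦ 0)
    (hl : Tendsto F l (𝓝 c)) (x : ℝ) : F x = c := by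
  have h_const : ∀ y, F y = F x := by
    intro y
    obtain ⟨C, hC⟩ := (hF.1 x y).const_of_ae_hasDerivAt_zero
      (by filter_upwards [hF.2] with z hz _ using hz)
    rw [hC y right_mem_uIcc, hC x left_mem_uIcc]
  exact tendsto_nhds_unique (tendsto_const_nhds.congr fun y ↦ (h_const y).symm) hl

end IsACPrimitive

theorem isACPrimitive_intervalIntegral {p : ℝ → ℂ} (hp : Integrable p) (c : ℝ) :
    IsACPrimitive (fun x ↦ ∫ t in c..x, p t) p :=
  ⟨hp.absolutelyContinuousOnInterval_intervalIntegral c, by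
    filter_upwards [LocallyIntegrable.ae_hasDerivAt_integral hp.locallyIntegrable] with x hx
      using hx c⟩

section Potential

variable {m s : ℕ} {u₀ : ℝ → ℂ}

theorem one_le_one_add_sq_rpow {r : ℝ} (hr : 0 ≤ r) (x : ℝ) : 1 ≤ (1 + x ^ 2) ^ r :=
  Real.one_le_rpow (by nlinarith [sq_nonneg x]) hr

theorem MemHms.memLp_deriv (hu : MemHms m s u₀) (hm : 1 ≤ m) : MemLp (deriv u₀) 2 volume := by
  have h := hu 1 hm
  simp only [iteratedDeriv_one] at h
  refine h.of_le (measurable_deriv u₀).aestronglyMeasurable (ae_of_all _ fun x ↦ ?_)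
  have hw := one_le_one_add_sq_rpow (r := (s : ℝ) / 2) (by positivity) x
  rw [norm_smul, Real.norm_of_nonneg (zero_le_one.trans hw)]
  exact le_mul_of_one_le_left (norm_nonneg _) hw

theorem memLp_inv_one_add_sq_rpow (hs : 1 ≤ s) :
    MemLp (fun x : ℝ ↦ ((1 + x ^ 2) ^ ((s : ℝ) / 2))⁻¹) 2 volume := by
  refine (memLp_two_iff_integrable_sq (by fun_prop : Measurable _).aestronglyMeasurable).2 <|
    integrable_inv_one_add_sq.mono' (by fun_prop : Measurable _).aestronglyMeasurable
      (ae_of_all _ fun x ↦ ?_)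
  have hx : (1 : ℝ) ≤ 1 + x ^ 2 := by nlinarith [sq_nonneg x]
  have hs' : (1 : ℝ) ≤ (s : ℝ) / 2 * (2 : ℕ) := by
    rw [Nat.cast_two, div_mul_cancel₀ _ two_ne_zero]
    exact_mod_cast hs
  rw [Real.norm_of_nonneg (by positivity), inv_pow, ← Real.rpow_mul_natCast (by positivity)]
  refine inv_anti₀ (by positivity) ?_
  calc 1 + x ^ 2 = (1 + x ^ 2) ^ (1 : ℝ) := (Real.rpow_one _).symm
    _ ≤ _ := Real.rpow_le_rpow_of_exponent_le hx hs'

theorem MemHms.integrable_deriv (hu : MemHms m s u₀) (hm : 1 ≤ m) (hs : 1 ≤ s) :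
    Integrable (deriv u₀) := by
  have h := (hu 1 hm).norm
  simp only [iteratedDeriv_one] at h
  refine ((memLp_inv_one_add_sq_rpow hs).integrable_mul h).congr'
    (measurable_deriv u₀).aestronglyMeasurable (ae_of_all _ fun x ↦ ?_)
  have hw := zero_lt_one.trans_le (one_le_one_add_sq_rpow (r := (s : ℝ) / 2) (by positivity) x)
  simp only [Pi.mul_apply, norm_norm, norm_smul, Real.norm_of_nonneg hw.le,
    inv_mul_cancel_left₀ hw.ne']

theorem norm_qf (x : ℝ) : ‖qf u₀ x‖ = ‖deriv u₀ x‖ := by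
  rw [qf, norm_mul, Complex.norm_conj, norm_exp_I_mul_ofReal, mul_one]

theorem MemHms.integrable_norm_deriv_sq (hu : MemHms m s u₀) (hm : 1 ≤ m) :
    Integrable fun x ↦ ‖deriv u₀ x‖ ^ 2 :=
  (memLp_two_iff_integrable_sq_norm (measurable_deriv u₀).aestronglyMeasurable).1
    (hu.memLp_deriv hm)

theorem monotone_phi (h : Integrable fun x ↦ ‖deriv u₀ x‖ ^ 2) : Monotone (phi u₀) :=
  fun _ _ hxy ↦ setIntegral_mono_set h.integrableOn (ae_of_all _ fun _ ↦ by positivity)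
    (Iio_subset_Iio hxy).eventuallyLE

theorem MemHms.aestronglyMeasurable_qf (hu : MemHms m s u₀) (hm : 1 ≤ m) :
    AEStronglyMeasurable (qf u₀) := by
  have := (monotone_phi (hu.integrable_norm_deriv_sq hm)).measurable
  have := measurable_deriv u₀
  unfold qf
  fun_prop

theorem MemHms.integrable_qf (hu : MemHms m s u₀) (hm : 1 ≤ m) (hs : 1 ≤ s) :
    Integrable (qf u₀) :=
  (hu.integrable_deriv hm hs).congr' (hu.aestronglyMeasurable_qf hm)
    (ae_of_all _ fun x ↦ (norm_qf x).symm)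

theorem MemHms.integrable_norm_qf_sq (hu : MemHms m s u₀) (hm : 1 ≤ m) :
    Integrable fun x ↦ (‖qf u₀ x‖ : ℂ) ^ 2 :=
  (hu.integrable_norm_deriv_sq hm).ofReal.congr (ae_of_all _ fun x ↦ by simp [norm_qf])

end Potential

structure IsTail (l : Filter ℝ) (p T : ℝ → ℂ) : Prop where
  isACPrimitive : IsACPrimitive T fun x ↦ -p x
  tendsto : Tendsto T l (𝓝 0)

theorem isTail_setIntegral_Ioi {p : ℝ → ℂ} (hp : Integrable p) :
    IsTail atTop p fun x ↦ ∫ t in Ioi x, p t := by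
  refine ⟨?_, tendsto_integral_Ioi_zero tendsto_id⟩
  refine ((IsACPrimitive.const (∫ t in Ioi 0, p t)).sub
    (isACPrimitive_intervalIntegral hp 0)).congr (fun x ↦ ?_) fun x ↦ zero_sub _
  rw [← intervalIntegral.integral_Ioi_sub_Ioi' hp.integrableOn hp.integrableOn, sub_sub_cancel]

theorem isTail_neg_setIntegral_Iio {p : ℝ → ℂ} (hp : Integrable p) :
    IsTail atBot p fun x ↦ -∫ t in Iio x, p t := by
  refine ⟨?_, by simpa using (tendsto_integral_Iio_zero (f := p) (μ := volume) tendsto_id).neg⟩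
  refine ((IsACPrimitive.const (∫ t in Iio 0, p t)).add
    (isACPrimitive_intervalIntegral hp 0)).neg.congr (fun x ↦ ?_) fun x ↦ by rw [zero_add]
  rw [← intervalIntegral.integral_Iio_sub_Iio' hp.integrableOn hp.integrableOn, add_sub_cancel]

section Jost

variable {u₀ : ℝ → ℂ} {k : ℂ} {f g : ℝ → ℂ}

def jostPhase (k : ℂ) (x : ℝ) : ℂ := exp (-(2 * I * k ^ 2 * x))

def jostDerivF (u₀ : ℝ → ℂ) (k : ℂ) (f g : ℝ → ℂ) (x : ℝ) : ℂ :=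
  k * (conj (qf u₀ x) * g x) + I / 2 * ((‖qf u₀ x‖ : ℂ) ^ 2 * f x)

def jostDerivG (u₀ : ℝ → ℂ) (k : ℂ) (f g : ℝ → ℂ) (x : ℝ) : ℂ :=
  -(k * (jostPhase k x * (qf u₀ x * f x))
    + I / 2 * (jostPhase k x * ((‖qf u₀ x‖ : ℂ) ^ 2 * g x)))

theorem continuous_jostPhase (k : ℂ) : Continuous (jostPhase k) := by
  unfold jostPhase; fun_prop

theorem jostPhase_zero (k : ℂ) : jostPhase k 0 = 1 := by simp [jostPhase]

theorem jostPhase_neg (k : ℂ) : jostPhase (-k) = jostPhase k := by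
  unfold jostPhase; simp only [neg_sq]

theorem norm_jostPhase (hk : (k ^ 2).im = 0) (x : ℝ) : ‖jostPhase k x‖ = 1 := by
  rw [jostPhase, Complex.norm_exp]
  simp [mul_re, mul_im, hk]

theorem conj_jostPhase_mul_jostPhase {k₂ : ℂ} (hk : conj k₂ ^ 2 = k ^ 2) (x : ℝ) :
    conj (jostPhase k₂ x) * jostPhase k x = 1 := by
  rw [jostPhase, jostPhase, ← exp_conj, ← exp_add, ← exp_zero]
  simp only [map_neg, map_mul, map_pow, map_ofNat, conj_I, conj_ofReal, hk]
  ring_nf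

theorem jostPhase_mul_setIntegral (k : ℂ) (s : Set ℝ) (h₁ h₂ : ℝ → ℂ) (x : ℝ) :
    jostPhase k x * ∫ y in s, exp (2 * I * k ^ 2 * ((x - y : ℝ) : ℂ)) * h₁ y * h₂ y
      = ∫ y in s, jostPhase k y * (h₁ y * h₂ y) := by
  rw [← integral_const_mul]
  congr 1 with y
  rw [jostPhase, jostPhase, ← mul_assoc, ← mul_assoc, ← exp_add]
  push_cast
  ring_nf

variable {l : Filter ℝ}

structure IsJostPair (u₀ : ℝ → ℂ) (k : ℂ) (l : Filter ℝ) (f g : ℝ → ℂ) : Prop where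
  isACPrimitive_f : IsACPrimitive f (jostDerivF u₀ k f g)
  isACPrimitive_G : IsACPrimitive (fun x ↦ jostPhase k x * g x) (jostDerivG u₀ k f g)
  tendsto_f : Tendsto f l (𝓝 1)
  tendsto_G : Tendsto (fun x ↦ jostPhase k x * g x) l (𝓝 0)

theorem IsJostPair.of_tail (tail : (ℝ → ℂ) → ℝ → ℂ)
    (htail : ∀ p, Integrable p → IsTail l p (tail p)) (hq : Integrable (qf u₀))
    (hq2 : Integrable fun x ↦ (‖qf u₀ x‖ : ℂ) ^ 2) (hk : (k ^ 2).im = 0)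
    (hf : Continuous f) (hg : Continuous g) {C : ℝ} (hC : ∀ x, ‖f x‖ ≤ C ∧ ‖g x‖ ≤ C)
    (hf_eq : ∀ x, f x = 1 - k * tail (fun y ↦ conj (qf u₀ y) * g y) x
      - I / 2 * tail (fun y ↦ (‖qf u₀ y‖ : ℂ) ^ 2 * f y) x)
    (hG_eq : ∀ x, jostPhase k x * g x = k * tail (fun y ↦ jostPhase k y * (qf u₀ y * f y)) x
      + I / 2 * tail (fun y ↦ jostPhase k y * ((‖qf u₀ y‖ : ℂ) ^ 2 * g y)) x) :
    IsJostPair u₀ k l f g := by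
  have hfC : ∀ᵐ x, ‖f x‖ ≤ C := ae_of_all _ fun x ↦ (hC x).1
  have hgC : ∀ᵐ x, ‖g x‖ ≤ C := ae_of_all _ fun x ↦ (hC x).2
  have hE : ∀ᵐ x, ‖jostPhase k x‖ ≤ 1 := ae_of_all _ fun x ↦ (norm_jostPhase hk x).le
  have hEm := (continuous_jostPhase k).aestronglyMeasurable (μ := volume)
  have hq_conj : Integrable fun x ↦ conj (qf u₀ x) :=
    conjCLE.toContinuousLinearMap.integrable_comp hq
  have t₁ := htail _ (hq_conj.mul_bdd hg.aestronglyMeasurable hgC)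
  have t₂ := htail _ (hq2.mul_bdd hf.aestronglyMeasurable hfC)
  have t₃ := htail _ ((hq.mul_bdd hf.aestronglyMeasurable hfC).bdd_mul hEm hE)
  have t₄ := htail _ ((hq2.mul_bdd hg.aestronglyMeasurable hgC).bdd_mul hEm hE)
  refine ⟨?_, ?_, ?_, ?_⟩
  · refine (((IsACPrimitive.const 1).sub (t₁.1.const_mul k)).sub (t₂.1.const_mul (I / 2))).congr
      (fun x ↦ (hf_eq x).symm) fun x ↦ ?_
    simp only [jostDerivF]
    ring
  · refine ((t₃.1.const_mul k).add (t₄.1.const_mul (I / 2))).congr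
      (fun x ↦ (hG_eq x).symm) fun x ↦ ?_
    simp only [jostDerivG]
    ring
  · have := (tendsto_const_nhds (x := (1 : ℂ))).sub (t₁.2.const_mul k) |>.sub
      (t₂.2.const_mul (I / 2))
    simp only [mul_zero, sub_zero] at this
    exact this.congr fun x ↦ (hf_eq x).symm
  · have := (t₃.2.const_mul k).add (t₄.2.const_mul (I / 2))
    simp only [mul_zero, add_zero] at this
    exact this.congr fun x ↦ (hG_eq x).symm

theorem SolPlus.isJostPair (hs : SolPlus u₀ k f g) (hq : Integrable (qf u₀))
    (hq2 : Integrable fun x ↦ (‖qf u₀ x‖ : ℂ) ^ 2) (hk : (k ^ 2).im = 0) :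
    IsJostPair u₀ k atTop f g := by
  obtain ⟨hf, hg, ⟨C, hC⟩, heq⟩ := hs
  refine .of_tail (fun p x ↦ ∫ t in Ioi x, p t) (fun p hp ↦ isTail_setIntegral_Ioi hp)
    hq hq2 hk hf hg hC (fun x ↦ (heq x).1) fun x ↦ ?_
  simp only [(heq x).2, mul_add, mul_left_comm (jostPhase k x), jostPhase_mul_setIntegral]

theorem SolMinus.isJostPair (hs : SolMinus u₀ k f g) (hq : Integrable (qf u₀))
    (hq2 : Integrable fun x ↦ (‖qf u₀ x‖ : ℂ) ^ 2) (hk : (k ^ 2).im = 0) :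
    IsJostPair u₀ k atBot f g := by
  obtain ⟨hf, hg, ⟨C, hC⟩, heq⟩ := hs
  refine .of_tail (fun p x ↦ -∫ t in Iio x, p t) (fun p hp ↦ isTail_neg_setIntegral_Iio hp)
    hq hq2 hk hf hg hC (fun x ↦ (heq x).1) fun x ↦ ?_
  simp only [(heq x).2, mul_add, mul_left_comm (jostPhase k x), mul_neg,
    jostPhase_mul_setIntegral]

end Jost

section Wronskian

variable {u₀ : ℝ → ℂ} {k k₂ : ℂ} {f g f₂ g₂ : ℝ → ℂ} {l : Filter ℝ} [l.NeBot]

theorem IsJostPair.wronskian_conj {ε : ℂ} (h₁ : IsJostPair u₀ k l f g)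
    (h₂ : IsJostPair u₀ k₂ l f₂ g₂) (hε : ε ^ 2 = 1) (hk : conj k₂ = ε * k) :
    f 0 * conj (f₂ 0) + ε * (g 0 * conj (g₂ 0)) = 1 := by
  have hE : ∀ x, conj (jostPhase k₂ x) * jostPhase k x = 1 :=
    conj_jostPhase_mul_jostPhase (by rw [hk, mul_pow, hε, one_mul])
  have hW := ((h₁.1.mul h₂.1.star).add ((h₁.2.mul h₂.2.star).const_mul ε)).congr
    (fun _ ↦ rfl) (G' := fun _ ↦ 0) fun x ↦ by
      simp only [jostDerivF, jostDerivG, map_add, map_mul, map_neg, map_pow, map_div₀,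
        map_ofNat, conj_I, conj_ofReal, conj_conj, hk]
      linear_combination (-(ε * k * qf u₀ x * f x * conj (g₂ x))
          - k * conj (qf u₀ x) * g x * conj (f₂ x)) * hE x
        + (-(conj (jostPhase k₂ x) * jostPhase k x * k * conj (qf u₀ x) * g x
          * conj (f₂ x))) * hε
  have hlim := (h₁.3.mul h₂.3.star).add ((h₁.4.mul h₂.4.star).const_mul ε)
  simpa [jostPhase_zero] using hW.eq_of_tendsto hlim 0

theorem IsJostPair.wronskian_of_conj (h₁ : IsJostPair u₀ k l f g)
    (h₂ : IsJostPair u₀ (conj k) l f₂ g₂) : f 0 * conj (f₂ 0) + g 0 * conj (g₂ 0) = 1 := by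
  simpa using h₁.wronskian_conj h₂ (one_pow 2) (by rw [conj_conj, one_mul])

theorem IsJostPair.wronskian_self (h : IsJostPair u₀ k l f g) (hk : conj k = -k) :
    f 0 * conj (f 0) - g 0 * conj (g 0) = 1 := by
  simpa [sub_eq_add_neg] using h.wronskian_conj h neg_one_sq (by rw [hk, neg_one_mul])

theorem IsJostPair.wronskian_neg (h₁ : IsJostPair u₀ k l f g)
    (h₂ : IsJostPair u₀ (-k) l f₂ g₂) : f 0 * g₂ 0 + g 0 * f₂ 0 = 0 := by
  have hW := ((h₁.1.mul h₂.2).add (h₁.2.mul h₂.1)).congr (fun _ ↦ rfl) (G' := fun _ ↦ 0)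
    fun x ↦ by
      simp only [jostDerivF, jostDerivG, jostPhase_neg]
      ring
  have hlim := (h₁.3.mul h₂.4).add (h₁.4.mul h₂.3)
  simpa [jostPhase_zero] using hW.eq_of_tendsto hlim 0

end Wronskian

section Scattering

variable {ω11p ω21p ω11m ω21m : ℝ → ℂ → ℂ} {k : ℂ}

theorem acoef_mul_conj_add_bcoef_mul_conj
    (hp : ω11p 0 k * conj (ω11p 0 (conj k)) + ω21p 0 k * conj (ω21p 0 (conj k)) = 1)
    (hm : ω11m 0 k * conj (ω11m 0 (conj k)) + ω21m 0 k * conj (ω21m 0 (conj k)) = 1) :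
    acoef ω11p ω21p ω11m ω21m k * conj (acoef ω11p ω21p ω11m ω21m (conj k))
      + bcoef ω11p ω21p ω11m ω21m k * conj (bcoef ω11p ω21p ω11m ω21m (conj k)) = 1 := by
  simp only [acoef, bcoef, map_add, map_sub, map_mul, conj_conj]
  linear_combination
    (ω11p 0 k * conj (ω11p 0 (conj k)) + ω21p 0 k * conj (ω21p 0 (conj k))) * hm + hp

theorem normSq_acoef_sub_normSq_bcoef (hk : conj k = -k)
    (hm : ω11m 0 k * conj (ω11m 0 (-k)) + ω21m 0 k * conj (ω21m 0 (-k)) = 1)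
    (hm_neg : ω11m 0 k * ω21m 0 (-k) + ω21m 0 k * ω11m 0 (-k) = 0)
    (hm_self : ω11m 0 k * conj (ω11m 0 k) - ω21m 0 k * conj (ω21m 0 k) = 1)
    (hp_self : ω11p 0 (-k) * conj (ω11p 0 (-k)) - ω21p 0 (-k) * conj (ω21p 0 (-k)) = 1) :
    normSq (acoef ω11p ω21p ω11m ω21m k) - normSq (bcoef ω11p ω21p ω11m ω21m k) = 1 := by
  have hm' := congrArg conj hm
  simp only [map_add, map_mul, conj_conj, map_one] at hm'
  -- `hm'` and `hm_neg` are a linear system for `ω⁻(0, -k)` whose determinant is `1` by `hm_self`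
  have h11 : ω11m 0 (-k) = ω11m 0 k := by
    linear_combination ω11m 0 k * hm' - conj (ω21m 0 k) * hm_neg - ω11m 0 (-k) * hm_self
  have h21 : ω21m 0 (-k) = -ω21m 0 k := by
    linear_combination -ω21m 0 k * hm' + conj (ω11m 0 k) * hm_neg - ω21m 0 (-k) * hm_self
  apply ofReal_injective
  simp only [ofReal_sub, ofReal_one, ← mul_conj, acoef, bcoef, hk, h11, h21, map_add, map_sub,
    map_mul, map_neg, conj_conj]
  linear_combination (ω11p 0 (-k) * conj (ω11p 0 (-k)) - ω21p 0 (-k) * conj (ω21p 0 (-k)))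
    * hm_self + hp_self

end Scattering

theorem stmt_12 (u₀ : ℝ → ℂ) (hu : MemHms 3 3 u₀)
    (ω11p ω21p ω11m ω21m : ℝ → ℂ → ℂ)
    (hp : ∀ k : ℂ, (k ^ 2).im ≤ 0 →
      SolPlus u₀ k (fun x => ω11p x k) (fun x => ω21p x k))
    (hm : ∀ k : ℂ, 0 ≤ (k ^ 2).im →
      SolMinus u₀ k (fun x => ω11m x k) (fun x => ω21m x k)) :
    (∀ k ∈ SigmaSet, k ≠ 0 →
      acoef ω11p ω21p ω11m ω21m k
          * (starRingEnd ℂ) (acoef ω11p ω21p ω11m ω21m ((starRingEnd ℂ) k))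
        + bcoef ω11p ω21p ω11m ω21m k
          * (starRingEnd ℂ) (bcoef ω11p ω21p ω11m ω21m ((starRingEnd ℂ) k)) = 1) ∧
    (∀ s : ℝ, s ≠ 0 →
      ‖acoef ω11p ω21p ω11m ω21m (s : ℂ)‖ ^ 2
        + ‖bcoef ω11p ω21p ω11m ω21m (s : ℂ)‖ ^ 2 = 1) ∧
    (∀ s : ℝ, s ≠ 0 →
      ‖acoef ω11p ω21p ω11m ω21m (Complex.I * s)‖ ^ 2
        - ‖bcoef ω11p ω21p ω11m ω21m (Complex.I * s)‖ ^ 2 = 1) := by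
  have hq := hu.integrable_qf (by norm_num) (by norm_num)
  have hq2 := hu.integrable_norm_qf_sq (by norm_num)
  have P (k : ℂ) (hk : (k ^ 2).im = 0) : IsJostPair u₀ k atTop (ω11p · k) (ω21p · k) :=
    (hp k hk.le).isJostPair hq hq2 hk
  have M (k : ℂ) (hk : (k ^ 2).im = 0) : IsJostPair u₀ k atBot (ω11m · k) (ω21m · k) :=
    (hm k hk.ge).isJostPair hq hq2 hk
  have h_conj (k : ℂ) (hk : (k ^ 2).im = 0) : (conj k ^ 2).im = 0 := by
    rw [← map_pow, conj_im, hk, neg_zero]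
  have h_neg (k : ℂ) (hk : (k ^ 2).im = 0) : ((-k) ^ 2).im = 0 := by rwa [neg_sq]
  have part₁ (k : ℂ) (hk : (k ^ 2).im = 0) := acoef_mul_conj_add_bcoef_mul_conj
    ((P k hk).wronskian_of_conj (P _ (h_conj k hk)))
    ((M k hk).wronskian_of_conj (M _ (h_conj k hk)))
  refine ⟨fun k hk _ ↦ part₁ k hk, fun s _ ↦ ?_, fun s _ ↦ ?_⟩
  · have h := part₁ s (by rw [← ofReal_pow, ofReal_im])
    rw [conj_ofReal, mul_conj, mul_conj] at h
    rw [Complex.sq_norm, Complex.sq_norm]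
    exact_mod_cast h
  · have hk : ((I * s) ^ 2).im = 0 := by simp [mul_pow, ← ofReal_pow]
    have hck : conj (I * s) = -(I * s) := by simp
    rw [Complex.sq_norm, Complex.sq_norm]
    refine normSq_acoef_sub_normSq_bcoef hck
      (by simpa [hck] using (M _ hk).wronskian_of_conj (M _ (h_conj _ hk)))
      ((M _ hk).wronskian_neg (M _ (h_neg _ hk))) ((M _ hk).wronskian_self hck)
      ((P _ (h_neg _ hk)).wronskian_self (by rw [map_neg, hck]))

end
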